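/- arXiv:1701.04180 — 2 statements merged into one kernel-verified Lean document; each statement's English description precedes it below -/
import Mathlib

section
/- The codewords of E_10 of Hamming weight 4 are exactly the 30 vectors of the form λ·χ(B_i ∪ B_j) for λ ∈ {1, ω, ϖ} and 1 ≤ i < j ≤ 5, where χ(B_i ∪ B_j) ∈ GF(4)^{10} is the vector equal to 1 on the two blocks B_i and B_j and 0 elsewhere. -/
open scoped BigOperators

section Defs

variable {F : Type} [Field F] [DecidableEq F]

/-- The binary coordinate in column `j` (0-indexed), row `k`. -/
def idx (j : Fin 10) (k : Fin 4) : Fin 40 :=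
  ⟨4 * j.val + k.val, by have := j.isLt; have := k.isLt; omega⟩

/-- The map φ : GF(4) → 𝔽₂⁴, 0↦0000, 1↦0011, ω↦0101, ϖ↦0110. -/
def phi (ω : F) : F → (Fin 4 → ZMod 2) := fun x =>
  if x = 0 then ![0, 0, 0, 0]
  else if x = 1 then ![0, 0, 1, 1]
  else if x = ω then ![0, 1, 0, 1]
  else ![0, 1, 1, 0]

/-- Ĉ : the image of a quaternary code under coordinatewise φ. -/
def hatSet (ω : F) (C : Set (Fin 10 → F)) : Set (Fin 40 → ZMod 2) :=
  { v | ∃ c ∈ C, ∀ (j : Fin 10) (k : Fin 4), v (idx j k) = phi ω (c j) k }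

/-- d₄¹⁰ : binary vectors of length 40 constant on each of the ten columns. -/
def d4ten : Set (Fin 40 → ZMod 2) :=
  { v | ∀ (j : Fin 10) (k k' : Fin 4), v (idx j k) = v (idx j k') }

/-- (d₄¹⁰)₀ : the subcode of d₄¹⁰ of codewords of weight divisible by 8. -/
def d4ten0 : Set (Fin 40 → ZMod 2) :=
  { v | v ∈ d4ten ∧ 8 ∣ hammingNorm v }

/-- The generator 1000 1000 ... 1000 of e_C. -/
def eCvec : Fin 40 → ZMod 2 := fun i => if i.val % 4 = 0 then 1 else 0

/-- The generator 1000 (×9) 0111 of e_B. -/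
def eBvec : Fin 40 → ZMod 2 := fun i =>
  if i.val < 36 then (if i.val % 4 = 0 then 1 else 0)
  else (if i.val % 4 = 0 then 0 else 1)

/-- ρ_C(C) = Ĉ + (d₄¹⁰)₀ + e_C. -/
def rhoC (ω : F) (C : Set (Fin 10 → F)) : Set (Fin 40 → ZMod 2) :=
  { v | ∃ a ∈ hatSet ω C, ∃ b ∈ d4ten0,
      ∃ e ∈ ({0, eCvec} : Set (Fin 40 → ZMod 2)), v = a + b + e }

/-- ρ_B(C) = Ĉ + (d₄¹⁰)₀ + e_B. -/
def rhoB (ω : F) (C : Set (Fin 10 → F)) : Set (Fin 40 → ZMod 2) :=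
  { v | ∃ a ∈ hatSet ω C, ∃ b ∈ d4ten0,
      ∃ e ∈ ({0, eBvec} : Set (Fin 40 → ZMod 2)), v = a + b + e }

/-- The trace inner product x⋆y = Σ Tr(xᵢ ȳᵢ), computed in GF(4) (its value lies
in the prime subfield GF(2)). -/
def traceIP (x y : Fin 10 → F) : F :=
  ∑ i, ((x i * (y i) ^ 2) + (x i * (y i) ^ 2) ^ 2)

/-- The dual of an additive code with respect to the trace inner product. -/
def addDual (C : Set (Fin 10 → F)) : Set (Fin 10 → F) :=
  { x | ∀ c ∈ C, traceIP x c = 0 }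

/-- The dual of a binary code of length 40 under the standard inner product. -/
def binDual (S : Set (Fin 40 → ZMod 2)) : Set (Fin 40 → ZMod 2) :=
  { x | ∀ c ∈ S, ∑ i, x i * c i = 0 }

/-- The dual of a quaternary code under the Hermitian inner product ⟨x,y⟩ = Σ xᵢ ȳᵢ. -/
def hermDual (S : Set (Fin 10 → F)) : Set (Fin 10 → F) :=
  { x | ∀ c ∈ S, ∑ i, x i * (c i) ^ 2 = 0 }

/-- The Hermitian self-dual [10,5,4] code E₁₀ over GF(4). -/
def E10 (ω : F) : Submodule F (Fin 10 → F) :=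
  Submodule.span F {![1,1,1,1,0,0,0,0,0,0], ![0,0,1,1,1,1,0,0,0,0],
    ![0,0,0,0,1,1,1,1,0,0], ![0,0,0,0,0,0,1,1,1,1],
    ![1,0,1,0,1,0,1,0,ω,ω^2]}

/-- The Hermitian self-dual [10,5,4] code B₁₀ over GF(4). -/
def B10 (ω : F) : Submodule F (Fin 10 → F) :=
  Submodule.span F {![1,1,1,1,0,0,0,0,0,0], ![0,1,ω,ω^2,1,0,0,0,0,0],
    ![0,0,0,0,0,1,1,1,1,0], ![0,0,0,0,0,0,1,ω,ω^2,1],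
    ![0,1,ω^2,ω,0,0,1,ω^2,ω,0]}

/-- Interpret a bit as an element of GF(4). -/
def b2f (x : ZMod 2) : F := if x = 1 then 1 else 0

/-- The projection 𝔽₂⁴⁰ → GF(4)¹⁰ : column j ↦ v₂ᵢₙ·1 + v·ω + v·ϖ with row labels 0,1,ω,ϖ. -/
def Proj (ω : F) (v : Fin 40 → ZMod 2) : Fin 10 → F := fun j =>
  b2f (v (idx j 1)) * 1 + b2f (v (idx j 2)) * ω + b2f (v (idx j 3)) * ω ^ 2

/-- The parity of column j (1 = odd number of ones). -/
def colPar (v : Fin 40 → ZMod 2) (j : Fin 10) : ZMod 2 := ∑ k, v (idx j k)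

/-- The parity of the top row (1 = odd number of ones). -/
def topPar (v : Fin 40 → ZMod 2) : ZMod 2 := ∑ j, v (idx j 0)

/-- The coordinate permutation of Fin 10 permuting the five blocks {2m, 2m+1}
as units according to π, preserving order within blocks. -/
def blockPerm (π : Equiv.Perm (Fin 5)) : Fin 10 → Fin 10 := fun t =>
  ⟨2 * (π ⟨t.val / 2, by have := t.isLt; omega⟩).val + t.val % 2, by
    have := (π ⟨t.val / 2, by have := t.isLt; omega⟩).isLt; have := t.isLt; omega⟩

/-- The coordinate permutation of Fin 10 interchanging the two coordinates within
each block belonging to S, fixing all other coordinates. -/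
def blockSwap (S : Finset (Fin 5)) : Fin 10 → Fin 10 := fun t =>
  if (⟨t.val / 2, by have := t.isLt; omega⟩ : Fin 5) ∈ S then
    ⟨2 * (t.val / 2) + (1 - t.val % 2), by have := t.isLt; omega⟩
  else t

end Defs

/-!
Write a codeword of `E10 ω` as `c₁ g₁ + ⋯ + c₅ g₅` in the given generators. Only `g₅` is not
constant on the blocks, and it makes the two entries of every block differ (in the last block
because `ω ≠ ω²`), so a codeword with `c₅ ≠ 0` has weight at least 5. The codewords with
`c₅ = 0` are, in characteristic 2, exactly the block-constant vectors whose five block values sum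
to zero; such a vector has twice the weight of its block values, so weight 4 means exactly two
nonzero block values, which are equal because their sum vanishes.
-/

open Finset

def blockOf (t : Fin 10) : Fin 5 := ⟨t / 2, by omega⟩

def evenCoord (m : Fin 5) : Fin 10 := ⟨2 * m, by omega⟩

def oddCoord (m : Fin 5) : Fin 10 := ⟨2 * m + 1, by omega⟩

lemma blockOf_comp_evenCoord : blockOf ∘ evenCoord = id := by
  ext; simp [blockOf, evenCoord]

lemma blockOf_comp_oddCoord : blockOf ∘ oddCoord = id := by
  ext; simp only [blockOf, oddCoord, Function.comp_apply, id]; omega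

lemma blockOf_surjective : Function.Surjective blockOf :=
  Function.LeftInverse.surjective (congrFun blockOf_comp_evenCoord)

lemma bijective_sumElim_evenCoord_oddCoord : Function.Bijective (Sum.elim evenCoord oddCoord) := by
  decide

section HammingBlocks

variable {α : Type*} [Zero α] [DecidableEq α]

lemma hammingNorm_eq_add_even_odd (v : Fin 10 → α) :
    hammingNorm v = hammingNorm (v ∘ evenCoord) + hammingNorm (v ∘ oddCoord) := by
  simp only [hammingNorm, card_filter]
  exact (Fintype.sum_bijective _ bijective_sumElim_evenCoord_oddCoord _ _ fun _ => rfl).symm.trans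
    (Fintype.sum_sum_type _)

lemma hammingNorm_comp_blockOf (b : Fin 5 → α) :
    hammingNorm (b ∘ blockOf) = 2 * hammingNorm b := by
  rw [hammingNorm_eq_add_even_odd, Function.comp_assoc, Function.comp_assoc,
    blockOf_comp_evenCoord, blockOf_comp_oddCoord, Function.comp_id, two_mul]

lemma five_le_hammingNorm_of_forall_ne {v : Fin 10 → α}
    (h : ∀ m, v (evenCoord m) ≠ v (oddCoord m)) : 5 ≤ hammingNorm v :=
  calc 5 = hammingDist (v ∘ evenCoord) (v ∘ oddCoord) := by simp [hammingDist, h]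
    _ ≤ hammingDist (v ∘ evenCoord) 0 + hammingDist 0 (v ∘ oddCoord) := hammingDist_triangle _ _ _
    _ = hammingNorm v := by
      rw [hammingDist_zero_right, hammingDist_zero_left, hammingNorm_eq_add_even_odd]

end HammingBlocks

section Pairs

variable {ι : Type*} [LinearOrder ι]

lemma eq_of_ite_or_eq {α : Type*} [Zero α] {lam lam' : α} (hlam : lam ≠ 0)
    {i j i' j' : ι} (hij : i < j) (hij' : i' < j')
    (h : (fun m => if m = i ∨ m = j then lam else 0) =
      fun m => if m = i' ∨ m = j' then lam' else 0) :
    lam = lam' ∧ i = i' ∧ j = j' := by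
  have hsupp : ∀ m, m = i ∨ m = j → (m = i' ∨ m = j') ∧ lam = lam' := fun m hm => by
    have := congrFun h m
    simp only [if_pos hm] at this
    split_ifs at this with hm'
    exacts [⟨hm', this⟩, absurd this hlam]
  have hsupp' : ∀ m, m = i' ∨ m = j' → m = i ∨ m = j := fun m hm' => by
    by_contra hm
    have := congrFun h m
    simp only [if_neg hm, if_pos hm'] at this
    exact hlam ((hsupp i (.inl rfl)).2.trans this.symm)
  refine ⟨(hsupp i (.inl rfl)).2, ?_⟩
  rcases (hsupp i (.inl rfl)).1 with hi | hi <;> rcases (hsupp j (.inr rfl)).1 with hj | hj <;>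
    rcases hsupp' i' (.inl rfl) with hi' | hi' <;> rcases hsupp' j' (.inr rfl) with hj' | hj' <;>
    first | exact ⟨hi, hj⟩ | order

variable [Fintype ι]

lemma exists_lt_of_hammingNorm_eq_two {α : Type*} [Zero α] [DecidableEq α] {b : ι → α}
    (hb : hammingNorm b = 2) :
    ∃ i j, i < j ∧ b i ≠ 0 ∧ ∀ m, m ≠ i → m ≠ j → b m = 0 := by
  obtain ⟨x, y, hxy, hs⟩ := card_eq_two.mp hb
  have hmem : ∀ m, b m ≠ 0 ↔ m = x ∨ m = y := fun m => by
    simpa using congrArg (m ∈ ·) hs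
  rcases hxy.lt_or_gt with h | h
  · exact ⟨x, y, h, (hmem x).2 (.inl rfl),
      fun m hx hy => not_not.mp fun hm => ((hmem m).1 hm).elim hx hy⟩
  · exact ⟨y, x, h, (hmem y).2 (.inr rfl),
      fun m hy hx => not_not.mp fun hm => ((hmem m).1 hm).elim hx hy⟩

lemma hammingNorm_ite_or {α : Type*} [Zero α] [DecidableEq α] {lam : α} (hlam : lam ≠ 0)
    {i j : ι} (hij : i ≠ j) :
    hammingNorm (fun m => if m = i ∨ m = j then lam else 0) = 2 := by
  rw [hammingNorm, ← card_pair hij]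
  congr 1
  ext m
  simp [hlam, or_iff_not_imp_left]

variable {R : Type*} [Ring R] [CharP R 2]

lemma sum_ite_or_eq_zero (lam : R) {i j : ι} (hij : i ≠ j) :
    ∑ m, (if m = i ∨ m = j then lam else 0) = 0 := by
  rw [Fintype.sum_eq_add i j hij (fun m hm => if_neg (not_or.mpr hm))]
  simp [CharTwo.add_self_eq_zero]

lemma exists_eq_ite_or_of_hammingNorm_eq_two [DecidableEq R] {b : ι → R}
    (hb : hammingNorm b = 2) (hsum : ∑ m, b m = 0) :
    ∃ lam ≠ 0, ∃ i j, i < j ∧ b = fun m => if m = i ∨ m = j then lam else 0 := by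
  obtain ⟨i, j, hij, hi, hzero⟩ := exists_lt_of_hammingNorm_eq_two hb
  have hji : b j = b i := by
    rw [Fintype.sum_eq_add i j hij.ne fun m hm => hzero m hm.1 hm.2] at hsum
    exact (CharTwo.add_eq_zero.mp hsum).symm
  refine ⟨b i, hi, i, j, hij, funext fun m => ?_⟩
  split_ifs with hm
  · rcases hm with rfl | rfl <;> simp [hji]
  · exact hzero m (not_or.mp hm).1 (not_or.mp hm).2

end Pairs

section E10

variable {F : Type} [Field F] {ω : F}

lemma mem_E10_iff {v : Fin 10 → F} : v ∈ E10 ω ↔ ∃ c₁ c₂ c₃ c₄ c₅ : F,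
    v = ![c₁ + c₅, c₁, c₁ + c₂ + c₅, c₁ + c₂, c₂ + c₃ + c₅, c₂ + c₃, c₃ + c₄ + c₅, c₃ + c₄,
      c₄ + ω * c₅, c₄ + ω ^ 2 * c₅] := by
  simp only [E10, Submodule.mem_span_insert, Submodule.mem_span_singleton]
  constructor
  · rintro ⟨a₁, _, ⟨a₂, _, ⟨a₃, _, ⟨a₄, _, ⟨a₅, rfl⟩, rfl⟩, rfl⟩, rfl⟩, rfl⟩
    refine ⟨a₁, a₂, a₃, a₄, a₅, ?_⟩
    ext t
    fin_cases t <;> simp <;> ring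
  · rintro ⟨c₁, c₂, c₃, c₄, c₅, rfl⟩
    refine ⟨c₁, _, ⟨c₂, _, ⟨c₃, _, ⟨c₄, _, ⟨c₅, rfl⟩, rfl⟩, rfl⟩, rfl⟩, ?_⟩
    ext t
    fin_cases t <;> simp <;> ring

variable [CharP F 2]

lemma comp_blockOf_mem_E10 {b : Fin 5 → F} (hb : ∑ m, b m = 0) : b ∘ blockOf ∈ E10 ω := by
  have hb₃ : b 3 = b 0 + b 1 + b 2 + b 4 := by
    rw [Fin.sum_univ_five] at hb
    linear_combination b 3 * CharTwo.two_eq_zero (R := F) - hb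
  refine mem_E10_iff.mpr ⟨b 0, b 0 + b 1, b 0 + b 1 + b 2, b 4, 0, ?_⟩
  ext t
  fin_cases t <;> simp [blockOf, hb₃] <;> ring_nf <;> simp [CharTwo.two_eq_zero]

lemma exists_comp_blockOf_of_mem_E10 [DecidableEq F] (hω : ω ^ 2 ≠ ω) {v : Fin 10 → F}
    (hv : v ∈ E10 ω) (hwt : hammingNorm v < 5) :
    ∃ b : Fin 5 → F, ∑ m, b m = 0 ∧ v = b ∘ blockOf := by
  obtain ⟨c₁, c₂, c₃, c₄, c₅, rfl⟩ := mem_E10_iff.mp hv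
  obtain rfl : c₅ = 0 := by
    by_contra hc
    refine hwt.not_ge (five_le_hammingNorm_of_forall_ne fun m => ?_)
    fin_cases m <;> simp [evenCoord, oddCoord, hc, Ne.symm hω]
  refine ⟨![c₁, c₁ + c₂, c₂ + c₃, c₃ + c₄, c₄], ?_, ?_⟩
  · have hsum : ∑ m, ![c₁, c₁ + c₂, c₂ + c₃, c₃ + c₄, c₄] m = 2 * (c₁ + c₂ + c₃ + c₄) := by
      simp [Fin.sum_univ_five]
      ring
    rw [hsum, CharTwo.two_eq_zero, zero_mul]
  · ext t
    fin_cases t <;> simp [blockOf]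

end E10

/-- `lam • χ(B_{i+1} ∪ B_{j+1})`, the block `B_{m+1}` being the coordinates `2m, 2m + 1`. -/
def blockPair {α : Type*} [Zero α] (lam : α) (i j : Fin 5) : Fin 10 → α := fun t =>
  if t.val / 2 = i.val ∨ t.val / 2 = j.val then lam else 0

lemma ite_or_comp_blockOf {α : Type*} [Zero α] (lam : α) (i j : Fin 5) :
    (fun m => if m = i ∨ m = j then lam else 0) ∘ blockOf = blockPair lam i j := by
  ext t
  simp only [Function.comp_apply, blockPair, blockOf, Fin.ext_iff]
  congr

theorem setOf_mem_E10_hammingNorm_eq_four {F : Type} [Field F] [CharP F 2] [DecidableEq F]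
    {ω : F} (hω : ω ^ 2 ≠ ω) :
    {v | v ∈ E10 ω ∧ hammingNorm v = 4} =
      {v | ∃ lam ≠ 0, ∃ i j : Fin 5, i < j ∧ v = blockPair lam i j} := by
  ext v
  constructor
  · rintro ⟨hv, hwt⟩
    obtain ⟨b, hsum, rfl⟩ := exists_comp_blockOf_of_mem_E10 hω hv (by omega)
    rw [hammingNorm_comp_blockOf] at hwt
    obtain ⟨lam, hlam, i, j, hij, rfl⟩ := exists_eq_ite_or_of_hammingNorm_eq_two (by omega) hsum
    exact ⟨lam, hlam, i, j, hij, ite_or_comp_blockOf lam i j⟩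
  · rintro ⟨lam, hlam, i, j, hij, rfl⟩
    rw [← ite_or_comp_blockOf]
    exact ⟨comp_blockOf_mem_E10 (sum_ite_or_eq_zero lam hij.ne),
      by rw [hammingNorm_comp_blockOf, hammingNorm_ite_or hlam hij.ne]⟩

lemma ncard_setOf_blockPair {α : Type*} [Zero α] [Finite α] :
    {v : Fin 10 → α | ∃ lam ≠ 0, ∃ i j : Fin 5, i < j ∧ v = blockPair lam i j}.ncard =
      (Nat.card α - 1) * 10 := by
  have himage : {v : Fin 10 → α | ∃ lam ≠ 0, ∃ i j : Fin 5, i < j ∧ v = blockPair lam i j} =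
      (fun p : α × Fin 5 × Fin 5 => blockPair p.1 p.2.1 p.2.2) '' ({0}ᶜ ×ˢ {p | p.1 < p.2}) := by
    ext v
    constructor
    · rintro ⟨lam, hlam, i, j, hij, rfl⟩
      exact ⟨(lam, i, j), ⟨hlam, hij⟩, rfl⟩
    · rintro ⟨⟨lam, i, j⟩, ⟨hlam, hij⟩, rfl⟩
      exact ⟨lam, hlam, i, j, hij, rfl⟩
  have hinj : Set.InjOn (fun p : α × Fin 5 × Fin 5 => blockPair p.1 p.2.1 p.2.2)
      ({0}ᶜ ×ˢ {p | p.1 < p.2}) := by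
    rintro ⟨lam, i, j⟩ ⟨hlam, hij⟩ ⟨lam', i', j'⟩ ⟨-, hij'⟩ h
    obtain ⟨rfl, rfl, rfl⟩ := eq_of_ite_or_eq hlam hij hij' <|
      blockOf_surjective.injective_comp_right <| by
        simpa only [ite_or_comp_blockOf] using h
    rfl
  have hpairs : {p : Fin 5 × Fin 5 | p.1 < p.2}.ncard = 10 := by
    rw [Set.ncard_eq_toFinset_card']
    rfl
  rw [himage, hinj.ncard_image, Set.ncard_prod, Set.ncard_compl, Set.ncard_singleton, hpairs]

section FieldOfFour

variable {F : Type*} [Field F] [Fintype F]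

lemma charP_two_of_card_eq_four (hF : Fintype.card F = 4) : CharP F 2 := by
  have h4 : (2 : F) * 2 = 0 := by
    have := FiniteField.cast_card_eq_zero F
    rw [hF] at this
    norm_num
    exact_mod_cast this
  exact CharTwo.of_one_ne_zero_of_two_eq_zero one_ne_zero (mul_self_eq_zero.mp h4)

lemma ne_zero_iff_of_card_eq_four [DecidableEq F] (hF : Fintype.card F = 4) {ω : F}
    (hω : ω ^ 2 = ω + 1) {x : F} : x ≠ 0 ↔ x = 1 ∨ x = ω ∨ x = ω ^ 2 := by
  have hω₀ : ω ≠ 0 := by rintro rfl; simp at hω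
  have hω₁ : ω ≠ 1 := by rintro rfl; exact one_ne_zero (by linear_combination -hω : (1 : F) = 0)
  have hω₂ : ω ^ 2 ≠ ω := by rw [hω]; simp
  have hω₃ : ω ^ 2 ≠ 1 := by rw [hω]; simpa using hω₀
  have hcard : #({0, 1, ω, ω ^ 2} : Finset F) = 4 := by
    rw [card_insert_of_notMem (by simp [hω₀.symm, (pow_ne_zero 2 hω₀).symm]),
      card_insert_of_notMem (by simp [hω₁.symm, hω₃.symm]), card_pair hω₂.symm]
  constructor
  · intro hx
    have hmem := mem_univ x
    rw [← eq_univ_of_card _ (hcard.trans hF.symm)] at hmem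
    simpa [hx] using hmem
  · rintro (rfl | rfl | rfl)
    exacts [one_ne_zero, hω₀, pow_ne_zero 2 hω₀]

end FieldOfFour

/-- The weight-4 codewords of E₁₀ are exactly the 30 vectors
λ·χ(Bᵢ ∪ Bⱼ), λ ∈ {1, ω, ϖ}, 1 ≤ i < j ≤ 5. -/
theorem stmt_7 (F : Type) [Field F] [Fintype F] [DecidableEq F]
    (hF : Fintype.card F = 4) (ω : F) (hω : ω ^ 2 = ω + 1) :
    {v : Fin 10 → F | v ∈ E10 ω ∧ hammingNorm v = 4} =
      {v : Fin 10 → F | ∃ lam : F, (lam = 1 ∨ lam = ω ∨ lam = ω ^ 2) ∧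
        ∃ i j : Fin 5, i < j ∧
          v = fun t : Fin 10 =>
            if t.val / 2 = i.val ∨ t.val / 2 = j.val then lam else 0} ∧
    Nat.card {v : Fin 10 → F // v ∈ E10 ω ∧ hammingNorm v = 4} = 30 := by
  have := charP_two_of_card_eq_four hF
  have hset := setOf_mem_E10_hammingNorm_eq_four (ω := ω) (by rw [hω]; simp)
  refine ⟨?_, ?_⟩
  · rw [hset]
    simp_rw [ne_zero_iff_of_card_eq_four hF hω]
    rfl
  · rw [← Set.coe_ofPred, Nat.card_coe_set_eq, hset, ncard_setOf_blockPair,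
      Nat.card_eq_fintype_card, hF]
end

section
/- The number of vectors v ∈ 𝔽₂^40 such that Proj(v) ∈ E_10, every column of the 4×10 array of v has even parity, and the top row of the array of v has even parity, is exactly 2^19. Likewise, the number of v ∈ 𝔽₂^40 such that Proj(v) ∈ E_10, every column has odd parity, and the top row has odd parity, is exactly 2^19. -/
open scoped BigOperators

/-!
Inside one column, the map `(a, b, c) ↦ a + b ω + c ω²` from `𝔽₂³` onto `GF(4)` is two-to-one
with kernel `{000, 111}`, since `1 + ω + ω² = 0`. Adding `111` to the last three entries of a
column flips its parity, so a column of prescribed parity is determined by its projection and its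
top entry, and every pair (projection, top entry) occurs. Hence `v ↦ (Proj v, top row of v)` is a
bijection from the vectors with all columns of parity `p` onto `GF(4)¹⁰ × 𝔽₂¹⁰`, and the
conditions `Proj v ∈ E₁₀` and "top row of parity `p`" cut this down to `E₁₀` times a hyperplane
of `𝔽₂¹⁰`: `4⁵ · 2⁹ = 2¹⁹` vectors for either value of `p`.
-/

section Count

variable {F : Type} [Field F]

lemma two_eq_zero_of_card_eq_four [Fintype F] (hF : Fintype.card F = 4) : (2 : F) = 0 := by
  have h4 : ((Fintype.card F : ℕ) : F) = 0 := FiniteField.cast_card_eq_zero F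
  rw [hF] at h4
  exact mul_self_eq_zero.mp (by linear_combination h4)

lemma ZMod.eq_zero_or_eq_one : ∀ x : ZMod 2, x = 0 ∨ x = 1 := by decide

@[simp] lemma b2f_zero : (b2f 0 : F) = 0 := if_neg zero_ne_one

@[simp] lemma b2f_one : (b2f 1 : F) = 1 := if_pos rfl

lemma b2f_add (h2 : (2 : F) = 0) (x y : ZMod 2) : (b2f (x + y) : F) = b2f x + b2f y := by
  obtain rfl | rfl := ZMod.eq_zero_or_eq_one x <;> obtain rfl | rfl := ZMod.eq_zero_or_eq_one y <;>
    simp only [b2f_zero, b2f_one, add_zero, zero_add, show (1 + 1 : ZMod 2) = 0 from rfl]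
  linear_combination -h2

/-- `Proj ω v j` is by definition `colProj ω (columns v j)`. -/
def colProj (ω : F) (w : Fin 4 → ZMod 2) : F :=
  b2f (w 1) * 1 + b2f (w 2) * ω + b2f (w 3) * ω ^ 2

lemma colProj_add (h2 : (2 : F) = 0) (ω : F) (w w' : Fin 4 → ZMod 2) :
    colProj ω (w + w') = colProj ω w + colProj ω w' := by
  simp only [colProj, Pi.add_apply, b2f_add h2]
  ring

lemma colProj_eq_zero {ω : F} (h2 : (2 : F) = 0) (hω : ω ^ 2 = ω + 1) {w : Fin 4 → ZMod 2}
    (h : colProj ω w = 0) : w 1 = w 3 ∧ w 2 = w 3 := by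
  unfold colProj at h
  generalize w 1 = a, w 2 = b, w 3 = c at h ⊢
  obtain rfl | rfl := ZMod.eq_zero_or_eq_one a <;> obtain rfl | rfl := ZMod.eq_zero_or_eq_one b <;>
    obtain rfl | rfl := ZMod.eq_zero_or_eq_one c <;> simp only [b2f_zero, b2f_one] at h <;> grind

lemma card_fun_sum_eq {G : Type*} [AddCommGroup G] (n : ℕ) (p : G) :
    Nat.card {e : Fin (n + 1) → G // ∑ i, e i = p} = Nat.card G ^ n := by
  rw [show Nat.card G ^ n = Nat.card (Fin n → G) by rw [Nat.card_fun, Nat.card_fin]]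
  refine Nat.card_congr
    { toFun := fun e => Fin.tail e.1
      invFun := fun t => ⟨Fin.cons (p - ∑ i, t i) t, by simp [Fin.sum_cons]⟩
      left_inv := fun ⟨e, he⟩ => Subtype.ext ?_
      right_inv := fun t => Fin.tail_cons _ _ }
  rw [Fin.sum_univ_succ] at he
  simp only [← he, Fin.tail, add_sub_cancel_right]
  exact Fin.cons_self_tail e

lemma colProj_top_bijective [Fintype F] (hF : Fintype.card F = 4) {ω : F}
    (hω : ω ^ 2 = ω + 1) (p : ZMod 2) :
    Function.Bijective
      (fun w : {w : Fin 4 → ZMod 2 // ∑ k, w k = p} => (colProj ω w.1, w.1 0)) := by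
  have h2 := two_eq_zero_of_card_eq_four hF
  rw [Nat.bijective_iff_injective_and_card]
  refine ⟨?_, ?_⟩
  · rintro ⟨w, hw⟩ ⟨w', hw'⟩ h
    obtain ⟨hproj, h0⟩ := Prod.mk.inj h
    obtain ⟨h13, h23⟩ := colProj_eq_zero h2 hω (w := w + w')
      (by rw [colProj_add h2, hproj]; linear_combination colProj ω w' * h2)
    simp only [Fin.sum_univ_four, Pi.add_apply] at hw hw' h13 h23
    ext k
    fin_cases k <;> grind
  · rw [card_fun_sum_eq 3, Nat.card_prod, Nat.card_zmod, Nat.card_eq_fintype_card, hF]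
    rfl

def genE10 (ω : F) : Fin 5 → Fin 10 → F :=
  ![![1,1,1,1,0,0,0,0,0,0], ![0,0,1,1,1,1,0,0,0,0],
    ![0,0,0,0,1,1,1,1,0,0], ![0,0,0,0,0,0,1,1,1,1],
    ![1,0,1,0,1,0,1,0,ω,ω^2]]

lemma E10_eq_span_range_genE10 (ω : F) : E10 ω = Submodule.span F (Set.range (genE10 ω)) := by
  rw [E10, genE10]
  simp only [Matrix.range_cons, Matrix.range_empty, Set.union_empty, Set.singleton_union]

/-- Coordinates `1, 3, 5, 7, 8` of the generators form a triangular matrix with diagonal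
`1, 1, 1, 1, ω`. -/
lemma linearIndependent_genE10 {ω : F} (hω : ω ≠ 0) : LinearIndependent F (genE10 ω) := by
  rw [Fintype.linearIndependent_iff]
  intro a ha
  have e1 := congrFun ha 1
  have e3 := congrFun ha 3
  have e5 := congrFun ha 5
  have e7 := congrFun ha 7
  have e8 := congrFun ha 8
  simp only [genE10, Finset.sum_apply, Pi.smul_apply, smul_eq_mul, Fin.sum_univ_five,
    Matrix.cons_val, Pi.zero_apply] at e1 e3 e5 e7 e8
  intro i
  fin_cases i <;> grind

lemma card_E10 {ω : F} (hω : ω ≠ 0) : Nat.card (E10 ω) = Nat.card F ^ 5 := by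
  rw [E10_eq_span_range_genE10, Nat.card_congr
      (Module.Basis.span (linearIndependent_genE10 hω)).equivFun.toEquiv,
    Nat.card_fun, Nat.card_fin]

def columns {α : Type*} : (Fin 40 → α) ≃ (Fin 10 → Fin 4 → α) where
  toFun v j k := v (idx j k)
  invFun W i := W ⟨i / 4, by omega⟩ ⟨i % 4, by omega⟩
  left_inv v := funext fun i => congrArg v (Fin.ext (by simp only [idx]; omega))
  right_inv W := funext₂ fun j k => by
    change W ⟨(4 * j.val + k.val) / 4, _⟩ ⟨(4 * j.val + k.val) % 4, _⟩ = W j k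
    have := k.isLt
    congr 1 <;> apply Fin.ext <;> dsimp only <;> omega

lemma proj_topRow_bijective [Fintype F] (hF : Fintype.card F = 4) {ω : F}
    (hω : ω ^ 2 = ω + 1) (p : ZMod 2) :
    Function.Bijective (fun v : {v : Fin 40 → ZMod 2 //
        Proj ω v ∈ E10 ω ∧ (∀ j : Fin 10, colPar v j = p) ∧ topPar v = p} =>
      ((⟨Proj ω v.1, v.2.1⟩ : E10 ω),
        (⟨fun j => v.1 (idx j 0), v.2.2.2⟩ : {e : Fin 10 → ZMod 2 // ∑ j, e j = p}))) := by
  have hcol := colProj_top_bijective hF hω p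
  constructor
  · rintro ⟨v, hv⟩ ⟨v', hv'⟩ h
    obtain ⟨hproj, htop⟩ := Prod.mk.inj h
    refine Subtype.ext (columns.injective (funext fun j => ?_))
    have hj := @hcol.1 ⟨columns v j, hv.2.1 j⟩ ⟨columns v' j, hv'.2.1 j⟩
      (Prod.ext (congrFun (congrArg Subtype.val hproj) j) (congrFun (congrArg Subtype.val htop) j))
    exact congrArg Subtype.val hj
  · rintro ⟨⟨c, hc⟩, ⟨e, he⟩⟩
    choose W hW using fun j => hcol.2 (c j, e j)
    set v := columns.symm fun j => (W j).1 with hv_def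
    have hv : ∀ j, columns v j = (W j).1 := fun j => by rw [hv_def, Equiv.apply_symm_apply]
    have hproj : Proj ω v = c := funext fun j => by
      change colProj ω (columns v j) = c j
      rw [hv]; exact congrArg Prod.fst (hW j)
    have htop : (fun j => v (idx j 0)) = e := funext fun j => by
      change columns v j 0 = e j
      rw [hv]; exact congrArg Prod.snd (hW j)
    refine ⟨⟨v, hproj ▸ hc, fun j => ?_, ?_⟩, ?_⟩
    · change ∑ k, columns v j k = p
      rw [hv]; exact (W j).2
    · change ∑ j, v (idx j 0) = p
      rw [htop]; exact he
    · simp only [hproj, htop]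

lemma card_proj_mem_E10_of_parity [Fintype F] (hF : Fintype.card F = 4) {ω : F}
    (hω : ω ^ 2 = ω + 1) (p : ZMod 2) :
    Nat.card {v : Fin 40 → ZMod 2 //
        Proj ω v ∈ E10 ω ∧ (∀ j : Fin 10, colPar v j = p) ∧ topPar v = p} = 2 ^ 19 := by
  have hω0 : ω ≠ 0 := by rintro rfl; simp at hω
  rw [Nat.card_eq_of_bijective _ (proj_topRow_bijective hF hω p), Nat.card_prod, card_E10 hω0,
    card_fun_sum_eq 9, Nat.card_eq_fintype_card, hF, Nat.card_zmod]
  norm_num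

end Count

theorem stmt_13_general (F : Type) [Field F] [Fintype F]
    (hF : Fintype.card F = 4) (ω : F) (hω : ω ^ 2 = ω + 1) :
    Nat.card {v : Fin 40 → ZMod 2 //
        Proj ω v ∈ E10 ω ∧ (∀ j : Fin 10, colPar v j = 0) ∧ topPar v = 0} = 2 ^ 19 ∧
    Nat.card {v : Fin 40 → ZMod 2 //
        Proj ω v ∈ E10 ω ∧ (∀ j : Fin 10, colPar v j = 1) ∧ topPar v = 1} = 2 ^ 19 :=
  ⟨card_proj_mem_E10_of_parity hF hω 0, card_proj_mem_E10_of_parity hF hω 1⟩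

/-- There are exactly 2¹⁹ vectors v ∈ 𝔽₂⁴⁰ with Proj(v) ∈ E₁₀, all
columns even and top row even; and exactly 2¹⁹ with all columns odd and top row odd. -/
theorem stmt_13 (F : Type) [Field F] [Fintype F] [DecidableEq F]
    (hF : Fintype.card F = 4) (ω : F) (hω : ω ^ 2 = ω + 1) :
    Nat.card {v : Fin 40 → ZMod 2 //
        Proj ω v ∈ E10 ω ∧ (∀ j : Fin 10, colPar v j = 0) ∧ topPar v = 0} = 2 ^ 19 ∧
    Nat.card {v : Fin 40 → ZMod 2 //
        Proj ω v ∈ E10 ω ∧ (∀ j : Fin 10, colPar v j = 1) ∧ topPar v = 1} = 2 ^ 19 :=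
  stmt_13_general F hF ω hω
end
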